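/- Let G be a K × n matrix over 𝔽₂ with K ≤ n whose entries are i.i.d. uniform Bernoulli. Then the probability that G has rank K is at least 1 − 2^(K − n); in particular it tends to 1 as n − K → ∞. -/

import Mathlib

/-! A matrix `G` over `𝔽_q` without full row rank has a vector `x ≠ 0` with `x ᵥ* G = 0`.
For fixed `x ≠ 0` the map `G ↦ x ᵥ* G` onto `𝔽_q^n` is linear and surjective, so its kernel
holds exactly a `q^(-n)` fraction of all matrices. A union bound over the fewer than `q^K`
vectors `x` bounds the fraction of rank-deficient matrices by `q^(K-n)`. -/

open Finset Matrix

theorem Matrix.card_eq_pow {m n α : Type*} [Fintype m] [Fintype n] [DecidableEq m]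
    [DecidableEq n] [Fintype α] :
    Fintype.card (Matrix m n α) = Fintype.card α ^ (Fintype.card m * Fintype.card n) := by
  rw [← Nat.card_eq_fintype_card, Matrix, Nat.card_fun, Nat.card_fun, ← pow_mul, mul_comm]
  simp only [Nat.card_eq_fintype_card]

section

variable {F : Type*} [Field F] {m n : Type*} [Fintype m]

theorem Matrix.exists_vecMul_eq_zero_of_rank_ne [Fintype n] {G : Matrix m n F}
    (hG : G.rank ≠ Fintype.card m) : ∃ x ≠ 0, x ᵥ* G = 0 := by
  contrapose! hG
  refine LinearIndependent.rank_matrix (vecMul_injective_iff.mp ?_)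
  rw [← coe_vecMulLinear, injective_iff_map_eq_zero]
  exact fun x hx => by_contra fun h => hG x h hx

theorem Matrix.vecMul_surjective_of_ne_zero {x : m → F} (hx : x ≠ 0) :
    Function.Surjective fun G : Matrix m n F => x ᵥ* G := by
  classical
  obtain ⟨i, hi⟩ := Function.ne_iff.mp hx
  intro w
  refine ⟨vecMulVec (Pi.single i (x i)⁻¹) w, ?_⟩
  simp [vecMul_vecMulVec, dotProduct_single, mul_inv_cancel₀ hi]

variable [Fintype F] [Fintype n] [DecidableEq m] [DecidableEq n] [DecidableEq F]

theorem Matrix.card_filter_vecMul_eq_zero_mul {x : m → F} (hx : x ≠ 0) :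
    #{G : Matrix m n F | x ᵥ* G = 0} * Fintype.card F ^ Fintype.card n =
      Fintype.card F ^ (Fintype.card m * Fintype.card n) := by
  let f : Matrix m n F →+ (n → F) := AddMonoidHom.mk' (x ᵥ* ·) (vecMul_add · · x)
  have hker : Nat.card f.ker = #{G : Matrix m n F | x ᵥ* G = 0} := by
    rw [Nat.card_eq_fintype_card, Fintype.card_subtype]
    simp [f]
  rw [← hker, ← card_eq_pow, ← Nat.card_eq_fintype_card (α := Matrix m n F),
    ← f.ker.card_mul_index, AddSubgroup.index_ker,
    AddMonoidHom.range_eq_top.mpr (vecMul_surjective_of_ne_zero hx), AddSubgroup.card_top,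
    Nat.card_fun]
  simp only [Nat.card_eq_fintype_card]

theorem Matrix.card_filter_rank_ne_mul_le :
    #{G : Matrix m n F | G.rank ≠ Fintype.card m} * Fintype.card F ^ Fintype.card n ≤
      Fintype.card F ^ Fintype.card m * Fintype.card F ^ (Fintype.card m * Fintype.card n) := by
  have hsub : ({G : Matrix m n F | G.rank ≠ Fintype.card m} : Finset _) ⊆
      ({x : m → F | x ≠ 0} : Finset _).biUnion fun x => {G | x ᵥ* G = 0} := by
    intro G hG
    obtain ⟨x, hx, hxG⟩ := exists_vecMul_eq_zero_of_rank_ne (mem_filter.mp hG).2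
    simpa using ⟨x, hx, hxG⟩
  calc #{G : Matrix m n F | G.rank ≠ Fintype.card m} * Fintype.card F ^ Fintype.card n
      ≤ (∑ x ∈ {x : m → F | x ≠ 0}, #{G : Matrix m n F | x ᵥ* G = 0}) *
          Fintype.card F ^ Fintype.card n := by
        gcongr
        exact (card_le_card hsub).trans card_biUnion_le
    _ = ∑ x ∈ {x : m → F | x ≠ 0}, Fintype.card F ^ (Fintype.card m * Fintype.card n) := by
        rw [sum_mul]
        exact sum_congr rfl fun x hx => card_filter_vecMul_eq_zero_mul (mem_filter.mp hx).2
    _ ≤ Fintype.card F ^ Fintype.card m * Fintype.card F ^ (Fintype.card m * Fintype.card n) := by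
        rw [sum_const, smul_eq_mul]
        gcongr
        exact (card_filter_le _ _).trans_eq (by simp)

theorem Matrix.one_sub_zpow_le_card_filter_rank_eq_div :
    1 - (Fintype.card F : ℝ) ^ ((Fintype.card m : ℤ) - Fintype.card n) ≤
      #{G : Matrix m n F | G.rank = Fintype.card m} / Fintype.card (Matrix m n F) := by
  have hq : (0 : ℝ) < Fintype.card F := by simp [Fintype.card_pos]
  have htotal : (0 : ℝ) < Fintype.card (Matrix m n F) := by simp [Fintype.card_pos]
  have hsplit : (#{G : Matrix m n F | G.rank = Fintype.card m} : ℝ) +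
      #{G : Matrix m n F | G.rank ≠ Fintype.card m} = Fintype.card (Matrix m n F) := by
    rw [← card_univ]
    exact_mod_cast card_filter_add_card_filter_not _
  have hbad : (#{G : Matrix m n F | G.rank ≠ Fintype.card m} : ℝ) ≤
      (Fintype.card F : ℝ) ^ Fintype.card m * Fintype.card (Matrix m n F) /
        (Fintype.card F : ℝ) ^ Fintype.card n := by
    rw [le_div_iff₀ (by positivity), card_eq_pow]
    exact_mod_cast card_filter_rank_ne_mul_le
  calc 1 - (Fintype.card F : ℝ) ^ ((Fintype.card m : ℤ) - Fintype.card n)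
      = (Fintype.card (Matrix m n F) - (Fintype.card F : ℝ) ^ Fintype.card m *
          Fintype.card (Matrix m n F) / (Fintype.card F : ℝ) ^ Fintype.card n) /
          Fintype.card (Matrix m n F) := by
        rw [zpow_sub₀ hq.ne', zpow_natCast, zpow_natCast]
        field_simp
    _ ≤ #{G : Matrix m n F | G.rank = Fintype.card m} / Fintype.card (Matrix m n F) := by
        gcongr
        linarith

end

theorem stmt5_general (K n : ℕ) :
    (1 : ℝ) - (2 : ℝ) ^ ((K : ℤ) - (n : ℤ)) ≤
      ((Finset.univ.filter
          (fun G : Matrix (Fin K) (Fin n) (ZMod 2) => G.rank = K)).card : ℝ) /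
        (Fintype.card (Matrix (Fin K) (Fin n) (ZMod 2)) : ℝ) := by
  simpa using
    Matrix.one_sub_zpow_le_card_filter_rank_eq_div (F := ZMod 2) (m := Fin K) (n := Fin n)

/-- A uniformly random K × n matrix over 𝔽₂ with K ≤ n has rank K with probability at
least 1 − 2^(K−n). The uniform distribution on matrices corresponds to i.i.d. uniform
Bernoulli entries. -/
theorem stmt5 (K n : ℕ) (hKn : K ≤ n) :
    (1 : ℝ) - (2 : ℝ) ^ ((K : ℤ) - (n : ℤ)) ≤
      ((Finset.univ.filter
          (fun G : Matrix (Fin K) (Fin n) (ZMod 2) => G.rank = K)).card : ℝ) /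
        (Fintype.card (Matrix (Fin K) (Fin n) (ZMod 2)) : ℝ) :=
  stmt5_general K n
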